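/- Let A be a commutative integral domain and B a reduced commutative ring that is finite as an A-module, with finitely many minimal primes, such that for every minimal prime p of B the composite A → B → B/p is injective. Then the group of A-algebra automorphisms of B is finite. -/

import Mathlib

/-!
An `A`-algebra map out of `B` is determined by its values on finitely many module generators,
and it sends each generator to a root of a monic polynomial over `A` that kills it. A monic
polynomial has only finitely many roots in `B`: the reduced ring `B` embeds into the finite
product of the domains `B ⧸ p` over its minimal primes, and in each of them the image of the
monic polynomial is nonzero.
-/

open Polynomial

theorem Polynomial.Monic.finite_setOfPred_aeval_eq_zero {R S : Type*} [CommRing R] [CommRing S]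
    [IsDomain S] [Algebra R S] {f : R[X]} (hf : f.Monic) :
    {x : S | aeval x f = 0}.Finite := by
  convert finite_setOfPred_isRoot (hf.map (algebraMap R S)).ne_zero using 3
  rw [IsRoot.def, eval_map_algebraMap]

theorem injective_pi_quotient_minimalPrimes (B : Type*) [CommRing B] [IsReduced B] :
    Function.Injective fun (b : B) (p : minimalPrimes B) => Ideal.Quotient.mk p.1 b := by
  intro b b' h
  have hmem : b - b' ∈ sInf (minimalPrimes B) := Submodule.mem_sInf.2 fun p hp => by
    simpa [Ideal.Quotient.eq] using congrFun h ⟨p, hp⟩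
  rw [minimalPrimes, Ideal.sInf_minimalPrimes, ← Ideal.zero_eq_bot, ← nilradical,
    nilradical_eq_zero] at hmem
  exact sub_eq_zero.1 hmem

theorem Polynomial.Monic.finite_setOfPred_aeval_eq_zero_of_isReduced {R S : Type*} [CommRing R]
    [CommRing S] [IsReduced S] [Algebra R S] (hS : (minimalPrimes S).Finite) {f : R[X]}
    (hf : f.Monic) : {x : S | aeval x f = 0}.Finite := by
  have : Finite (minimalPrimes S) := hS
  refine Set.Finite.of_finite_image ?_ (injective_pi_quotient_minimalPrimes S).injOn
  refine (Set.Finite.pi (t := fun p : minimalPrimes S => {y : S ⧸ p.1 | aeval y f = 0})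
    fun p => ?_).subset ?_
  · have : p.1.IsPrime := p.2.1.1
    exact hf.finite_setOfPred_aeval_eq_zero
  · rintro _ ⟨x, hx, rfl⟩ p -
    simp only [Set.mem_ofPred_eq] at hx ⊢
    rw [← Ideal.Quotient.mkₐ_eq_mk R, aeval_algHom_apply, hx, map_zero]

theorem finite_algHom_of_finite_roots_of_monic {R S T : Type*} [CommRing R] [CommRing S]
    [CommRing T] [Algebra R S] [Algebra R T] [Module.Finite R S]
    (hT : ∀ f : R[X], f.Monic → {y : T | aeval y f = 0}.Finite) : Finite (S →ₐ[R] T) := by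
  obtain ⟨s, hs⟩ := Module.Finite.fg_top (R := R) (M := S)
  choose f hmonic hroot using fun x : S => Algebra.IsIntegral.isIntegral (R := R) x
  have : ∀ x : s, Finite {y : T | aeval y (f x) = 0} := fun x => hT _ (hmonic x)
  refine Finite.of_injective (β := ∀ x : s, {y : T | aeval y (f x) = 0})
    (fun φ x => ⟨φ x, by
      rw [Set.mem_ofPred_eq, aeval_algHom_apply, aeval_def, hroot, map_zero]⟩) ?_
  intro φ ψ h
  exact AlgHom.toLinearMap_injective <| LinearMap.ext_on hs fun x hx =>
    congrArg Subtype.val (congrFun h ⟨x, hx⟩)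

theorem algAut_finite_of_reduced_module_finite_general
    {A B : Type*} [CommRing A] [CommRing B] [IsReduced B]
    [Algebra A B] [Module.Finite A B]
    (hfin : (minimalPrimes B).Finite) :
    Finite (B ≃ₐ[A] B) :=
  have : Finite (B →ₐ[A] B) := finite_algHom_of_finite_roots_of_monic fun _ hf =>
    hf.finite_setOfPred_aeval_eq_zero_of_isReduced hfin
  .of_injective _ AlgEquiv.coe_toAlgHom_injective

/-- Let `A` be a commutative integral domain and `B` a reduced commutative ring which is
finite as an `A`-module, has finitely many minimal primes, and is such that for every
minimal prime `p` of `B` the composite `A → B → B/p` is injective. Then the group of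
`A`-algebra automorphisms of `B` is finite. -/
theorem algAut_finite_of_reduced_module_finite
    {A B : Type*} [CommRing A] [IsDomain A] [CommRing B] [IsReduced B]
    [Algebra A B] [Module.Finite A B]
    (hfin : (minimalPrimes B).Finite)
    (hinj : ∀ p ∈ minimalPrimes B,
      Function.Injective fun a : A => Ideal.Quotient.mk p (algebraMap A B a)) :
    Finite (B ≃ₐ[A] B) :=
  algAut_finite_of_reduced_module_finite_general hfin
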